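/- The graph G_F constructed in the NP-hardness reduction from Positive (1 in 3)-3SAT is 3-degenerate: every nonempty subgraph of G_F has a vertex of degree at most 3. -/

import Mathlib

/-- A grid edge: a lattice point together with a direction; `true` means the
horizontal edge from `pt` to `pt + (1,0)`, `false` the vertical edge from `pt`
to `pt + (0,1)`. -/
structure GridEdge where
  pt : ℤ × ℤ
  horiz : Bool
deriving DecidableEq

/-- The two endpoints of a grid edge. -/
def GridEdge.endpoints (e : GridEdge) : Finset (ℤ × ℤ) :=
  {e.pt, if e.horiz then (e.pt.1 + 1, e.pt.2) else (e.pt.1, e.pt.2 + 1)}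

/-- Two distinct grid edges are adjacent when they share an endpoint. -/
def GridEdge.adj (e f : GridEdge) : Prop :=
  e ≠ f ∧ (e.endpoints ∩ f.endpoints).Nonempty

/-- A simple path in the integer grid, given by its sequence of edges:
consecutive edges are adjacent, all edges are distinct, and
non-consecutive edges are non-adjacent. -/
structure GridPath where
  edges : List GridEdge
  nonempty : edges ≠ []
  nodup : edges.Nodup
  chain : edges.Chain' GridEdge.adj
  simple : ∀ i j : ℕ, i + 1 < j → ∀ (hi : i < edges.length) (hj : j < edges.length),
    ¬ GridEdge.adj (edges.get ⟨i, hi⟩) (edges.get ⟨j, hj⟩)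

/-- The number of bends of a grid path: consecutive pairs of edges with
different directions. -/
def GridPath.bends (P : GridPath) : ℕ :=
  ((P.edges.zip P.edges.tail).filter fun q => q.1.horiz != q.2.horiz).length

/-- Two paths (edge-)intersect when they share a grid edge. -/
def GridPath.Inter (P Q : GridPath) : Prop :=
  ∃ e : GridEdge, e ∈ P.edges ∧ e ∈ Q.edges

/-- A relevant edge of a path: an extremity (first or last) edge or a bend edge. -/
def GridPath.IsRelevant (P : GridPath) (e : GridEdge) : Prop :=
  P.edges.head? = some e ∨ P.edges.getLast? = some e ∨
    ∃ q ∈ P.edges.zip P.edges.tail, q.1.horiz ≠ q.2.horiz ∧ (e = q.1 ∨ e = q.2)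

/-- An EPG representation of a graph: vertices are assigned grid paths, and two
distinct vertices are adjacent iff their paths share a grid edge. -/
def IsEPGRep {V : Type*} (G : SimpleGraph V) (P : V → GridPath) : Prop :=
  ∀ u v : V, u ≠ v → (G.Adj u v ↔ (P u).Inter (P v))

/-- The Helly property for a family of grid paths: every pairwise
edge-intersecting subfamily has a grid edge common to all its members. -/
def HellyEPG {ι : Type*} (P : ι → GridPath) : Prop :=
  ∀ T : Set ι, (∀ i ∈ T, ∀ j ∈ T, (P i).Inter (P j)) →
    ∃ e : GridEdge, ∀ i ∈ T, e ∈ (P i).edges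

/-- The set of maximal cliques of a graph. -/
def maxCliques {V : Type*} (G : SimpleGraph V) : Set (Set V) :=
  {s | G.IsClique s ∧ ∀ t : Set V, G.IsClique t → s ⊆ t → s = t}

/-- The edges of the 12-vertex gadget graph `H`: a 4-cycle on `0,1,2,3`
together with eight outer vertices `4,…,11`, two of them attached to each pair
of consecutive vertices of the 4-cycle, forming eight triangles.
(In the paper's labels: `b,c,f,g` are the cycle, `a,d,e,h` among the outer.) -/
def Hedges : List (Fin 12 × Fin 12) :=
  [(0, 1), (1, 2), (2, 3), (3, 0),
   (4, 0), (4, 1), (5, 0), (5, 1),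
   (6, 1), (6, 2), (7, 1), (7, 2),
   (8, 2), (8, 3), (9, 2), (9, 3),
   (10, 3), (10, 0), (11, 3), (11, 0)]

/-- Adjacency in the gadget graph `H`. -/
def Hadj (x y : Fin 12) : Prop := (x, y) ∈ Hedges ∨ (y, x) ∈ Hedges

/-- The attachment vertex of the clause gadget for the first, second and third
literal of a clause (the vertices `a`, `e`, `h` of the paper). -/
def attachPos : Fin 3 → Fin 12
  | 0 => 4
  | 1 => 6
  | 2 => 8

/-- The vertices of the graph `G_F` built from a positive 3-CNF formula with
`m` variables and `t` clauses. -/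
inductive GFVertex (m t : ℕ) where
  /-- vertex of a clause gadget (a copy of `H`) -/
  | clause : Fin t → Fin 12 → GFVertex m t
  /-- the variable vertex `v_j` -/
  | var : Fin m → GFVertex m t
  /-- vertex of one of the two copies of `H` attached to a variable vertex -/
  | varG : Fin m → Fin 2 → Fin 12 → GFVertex m t
  /-- the vertical reference vertex `V` -/
  | vert : GFVertex m t
  /-- the true vertex `T` -/
  | tt : GFVertex m t
  /-- the remaining five vertices of the `K_{2,4}` containing `T`:
  `0,1,2` complete the stable set of size four, `3,4` form the other side -/
  | k24 : Fin 5 → GFVertex m t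
  /-- vertex of one of the four base copies of `H`
  (`0,1` attached to `T`, `2,3` attached to `V`) -/
  | base : Fin 4 → Fin 12 → GFVertex m t
deriving DecidableEq

/-- The (one-sided) adjacency relation of `G_F`, for a formula whose clause `i`
consists of the positive variables `cl i 0, cl i 1, cl i 2`. -/
def GFRel {m t : ℕ} (cl : Fin t → Fin 3 → Fin m) :
    GFVertex m t → GFVertex m t → Prop
  | .clause i x, .clause i' y => i = i' ∧ Hadj x y
  | .var j, .clause i x => ∃ p : Fin 3, cl i p = j ∧ x = attachPos p
  | .var j, .varG j' _ x => j = j' ∧ (x = 4 ∨ x = 0 ∨ x = 1)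
  | .varG j s x, .varG j' s' y => j = j' ∧ s = s' ∧ Hadj x y
  | .vert, .clause _ x => x = 10
  | .tt, .var _ => True
  | .tt, .vert => True
  | .tt, .k24 i => i = 3 ∨ i = 4
  | .k24 i, .k24 i' => (i = 0 ∨ i = 1 ∨ i = 2) ∧ (i' = 3 ∨ i' = 4)
  | .tt, .base s x => (s = 0 ∨ s = 1) ∧ (x = 4 ∨ x = 0 ∨ x = 1)
  | .vert, .base s x => (s = 2 ∨ s = 3) ∧ (x = 4 ∨ x = 0 ∨ x = 1)
  | .base s x, .base s' y => s = s' ∧ Hadj x y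
  | _, _ => False

/-- The graph `G_F` of the NP-hardness reduction. -/
def GF {m t : ℕ} (cl : Fin t → Fin 3 → Fin m) : SimpleGraph (GFVertex m t) :=
  SimpleGraph.fromRel (GFRel cl)

/-- Rank of a vertex of `H` in the degeneracy ordering: outer vertices first,
then the cycle vertices in order. -/
def rankH (x : Fin 12) : ℕ := if (x : ℕ) ≥ 4 then 0 else (x : ℕ) + 1

/-- The neighbors of higher rank of a vertex of `H`. -/
def Hup : Fin 12 → List (Fin 12)
  | 0 => [1, 3] | 1 => [2] | 2 => [3] | 3 => []
  | 4 => [0, 1] | 5 => [0, 1] | 6 => [1, 2] | 7 => [1, 2]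
  | 8 => [2, 3] | 9 => [2, 3] | 10 => [3, 0] | 11 => [3, 0]

instance : DecidablePred (· ∈ Hedges) := fun _ => List.instDecidableMemOfLawfulBEq _ _
instance : ∀ x y, Decidable (Hadj x y) := fun _ _ => inferInstanceAs (Decidable (_ ∨ _))

lemma Hup_spec : ∀ x y : Fin 12, Hadj x y → rankH x ≤ rankH y → y ∈ Hup x := by decide

lemma rankH_le : ∀ x : Fin 12, rankH x ≤ 4 := by decide

/-- Rank of a vertex of `G_F` in the degeneracy ordering. -/
def rk {m t : ℕ} : GFVertex m t → ℕ
  | .clause _ x => rankH x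
  | .var _ => 5
  | .varG _ _ x => rankH x
  | .vert => 5
  | .tt => 7
  | .k24 i => if (i : ℕ) ≤ 2 then 5 else 6
  | .base _ x => rankH x

/-- The neighbors of (weakly) higher rank of a vertex of `G_F`. -/
def up {m t : ℕ} (cl : Fin t → Fin 3 → Fin m) : GFVertex m t → List (GFVertex m t)
  | .clause i x => (Hup x).map (.clause i) ++
      (if x = 4 then [.var (cl i 0)] else if x = 6 then [.var (cl i 1)]
       else if x = 8 then [.var (cl i 2)] else if x = 10 then [.vert] else [])
  | .var _ => [.tt]
  | .varG j s x => (Hup x).map (.varG j s) ++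
      (if x = 4 ∨ x = 0 ∨ x = 1 then [.var j] else [])
  | .vert => [.tt]
  | .tt => []
  | .k24 i => if (i : ℕ) ≤ 2 then [.k24 3, .k24 4] else [.tt]
  | .base s x => (Hup x).map (.base s) ++
      (if x = 4 ∨ x = 0 ∨ x = 1 then [if (s : ℕ) ≤ 1 then .tt else .vert] else [])

lemma up_length {m t : ℕ} (cl : Fin t → Fin 3 → Fin m) (v : GFVertex m t) :
    (up cl v).length ≤ 3 := by
  cases v with
  | clause i x => fin_cases x <;> simp [up, Hup]
  | varG j s x => fin_cases x <;> simp [up, Hup]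
  | base s x => fin_cases x <;> simp [up, Hup]
  | k24 i => fin_cases i <;> simp [up]
  | _ => simp [up]

lemma key {m t : ℕ} (cl : Fin t → Fin 3 → Fin m) (v u : GFVertex m t)
    (h : GFRel cl v u ∨ GFRel cl u v) (hr : rk v ≤ rk u) : u ∈ up cl v := by
  have hH : ∀ (x y : Fin 12), Hadj x y → rankH x ≤ rankH y → y ∈ Hup x := Hup_spec
  cases v <;> cases u <;>
    simp only [GFRel, rk, up, or_false, false_or, or_self] at h hr ⊢ <;>
    try exact h.elim
  case clause.clause i x i' y =>
    obtain ⟨rfl, hxy⟩ | ⟨rfl, hxy⟩ := h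
    · exact List.mem_append_left _ (List.mem_map_of_mem (hH _ _ hxy hr))
    · exact List.mem_append_left _ (List.mem_map_of_mem (hH _ _ hxy.symm hr))
  case clause.var i x j =>
    obtain ⟨p, rfl, rfl⟩ := h
    fin_cases p <;> simp [attachPos]
  case var.clause j i x =>
    obtain ⟨p, _, rfl⟩ := h
    exact absurd hr (by fin_cases p <;> decide)
  case var.varG j j' s x =>
    obtain ⟨rfl, hx⟩ := h
    exact absurd hr (by rcases hx with rfl | rfl | rfl <;> decide)
  case varG.var j s x j' =>
    obtain ⟨rfl, hx⟩ := h
    rcases hx with rfl | rfl | rfl <;> simp [Hup]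
  case varG.varG j s x j' s' y =>
    obtain ⟨rfl, rfl, hxy⟩ | ⟨rfl, rfl, hxy⟩ := h
    · exact List.mem_append_left _ (List.mem_map_of_mem (hH _ _ hxy hr))
    · exact List.mem_append_left _ (List.mem_map_of_mem (hH _ _ hxy.symm hr))
  case clause.vert i x =>
    obtain rfl := h; simp [Hup]
  case vert.clause i x =>
    obtain rfl := h; exact absurd hr (by decide)
  case var.tt j => simp
  case tt.var j => exact absurd hr (by norm_num)
  case vert.tt => simp
  case tt.vert => exact absurd hr (by norm_num)
  case tt.k24 i =>
    exact absurd hr (by rcases h with rfl | rfl <;> decide)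
  case k24.tt i =>
    rcases h with rfl | rfl <;> rw [if_neg (by decide)] <;> simp
  case k24.k24 i i' =>
    obtain ⟨hi, hi'⟩ | ⟨hi', hi⟩ := h
    · rcases hi with rfl | rfl | rfl <;> rcases hi' with rfl | rfl <;> rw [if_pos (by decide)] <;> simp
    · exact absurd hr (by rcases hi with rfl | rfl <;>
        rcases hi' with rfl | rfl | rfl <;> decide)
  case tt.base s x =>
    obtain ⟨_, hx⟩ := h
    exact absurd hr (by rcases hx with rfl | rfl | rfl <;> decide)
  case base.tt s x =>
    obtain ⟨hs, hx⟩ := h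
    rcases hs with rfl | rfl <;> rcases hx with rfl | rfl | rfl <;>
      rw [if_pos (by decide)] <;> simp [Hup]
  case vert.base s x =>
    obtain ⟨_, hx⟩ := h
    exact absurd hr (by rcases hx with rfl | rfl | rfl <;> decide)
  case base.vert s x =>
    obtain ⟨hs, hx⟩ := h
    rcases hs with rfl | rfl <;> rcases hx with rfl | rfl | rfl <;>
      rw [if_pos (by decide)] <;> rw [if_neg (by decide)] <;> simp [Hup]
  case base.base s x s' y =>
    obtain ⟨rfl, hxy⟩ | ⟨rfl, hxy⟩ := h
    · exact List.mem_append_left _ (List.mem_map_of_mem (hH _ _ hxy hr))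
    · exact List.mem_append_left _ (List.mem_map_of_mem (hH _ _ hxy.symm hr))

/-- `G_F` is 3-degenerate: every nonempty (induced) subgraph has a vertex of
degree at most 3. -/
theorem GF_three_degenerate {m t : ℕ} (cl : Fin t → Fin 3 → Fin m)
    (S : Finset (GFVertex m t)) (hS : S.Nonempty) :
    ∃ v ∈ S, {u : GFVertex m t | u ∈ S ∧ (GF cl).Adj v u}.ncard ≤ 3 := by
  obtain ⟨v, hv, hmin⟩ := S.exists_min_image rk hS
  refine ⟨v, hv, ?_⟩
  have hsub : {u : GFVertex m t | u ∈ S ∧ (GF cl).Adj v u} ⊆ ↑(up cl v).toFinset := by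
    rintro u ⟨huS, hadj⟩
    rw [GF, SimpleGraph.fromRel_adj] at hadj
    simpa using key cl v u hadj.2 (hmin u huS)
  calc {u : GFVertex m t | u ∈ S ∧ (GF cl).Adj v u}.ncard
      ≤ ((up cl v).toFinset : Set (GFVertex m t)).ncard :=
        Set.ncard_le_ncard hsub (Set.toFinite _)
    _ = (up cl v).toFinset.card := Set.ncard_coe_finset _
    _ ≤ (up cl v).length := (up cl v).toFinset_card_le
    _ ≤ 3 := up_length cl v
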